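/- arXiv:1405.6332 — 7 statements merged into one kernel-verified Lean document; each statement's English description precedes it below -/
import Mathlib

section
/- Let ω: ℝ → ℝ be continuous with ω(t)/t → 0 as t → ±∞, λ > 0, δ > 0, and β continuous with 0 < β₀ ≤ β(t) ≤ β₁. Define x⁺_λ(τ, ω) = (2 ∫_{-∞}^0 e^{2λr + 2δω(r)} β(r+τ) dr)^{-1/2}. Then x⁺_λ is tempered: for every c > 0 and τ ∈ ℝ, e^{ct} x⁺_λ(τ + t, θ_t ω) → 0 as t → −∞, where θ_t ω(s) = ω(s+t) − ω(t). -/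
set_option autoImplicit false

open MeasureTheory Filter Real Set Topology

/-!
By sublinearity, `|ω s| ≤ ε |s| + M` for any `ε > 0`. Plugged into the shifted path this
bounds the exponent `2λr + 2δ(ω(r+t) - ω(t))` above by `(2λ - κ) r - 2κt + const`
(with `κ = 2δε`), which makes the integral finite, and below on `[-1, 0]` by
`2κt - const`, which makes it at least `K e^{2κt}`. Hence
`x⁺_λ(τ + t, θ_t ω) ≤ (2K)^{-1/2} e^{-κt}`, and choosing `κ < c` gives the decay.
-/

lemma exists_abs_le_mul_abs_add {ω : ℝ → ℝ} (hωc : Continuous ω)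
    (hω : Tendsto (fun t => ω t / t) (cocompact ℝ) (𝓝 0)) {ε : ℝ} (hε : 0 < ε) :
    ∃ M, ∀ s, |ω s| ≤ ε * |s| + M := by
  set g : ℝ → ℝ := fun s => max (|ω s| - ε * |s|) 0
  have hg : Continuous g := by fun_prop
  have hg_le : ∀ᶠ s in cocompact ℝ, g s ≤ g 0 := by
    filter_upwards [hω.eventually (Metric.ball_mem_nhds 0 hε),
      (isCompact_singleton (x := (0 : ℝ))).compl_mem_cocompact] with s hs hs0
    rw [Real.dist_eq, sub_zero, abs_div, div_lt_iff₀ (abs_pos.2 hs0)] at hs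
    exact (max_le (by linarith) le_rfl).trans (le_max_right _ _)
  obtain ⟨x, hx⟩ := hg.exists_forall_ge' 0 hg_le
  exact ⟨g x, fun s => by linarith [hx s, le_max_left (|ω s| - ε * |s|) 0]⟩

lemma abs_mul_sub_shift_le {ω : ℝ → ℝ} {δ ε M : ℝ} (hδ : 0 ≤ δ)
    (hM : ∀ s, |ω s| ≤ ε * |s| + M) {r t : ℝ} (hr : r ≤ 0) (ht : t ≤ 0) :
    |2 * δ * (ω (r + t) - ω t)| ≤ 2 * δ * ε * (-r - 2 * t) + 4 * δ * M := by
  have hinc : |ω (r + t) - ω t| ≤ ε * (-r - 2 * t) + 2 * M := by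
    have h₁ := hM (r + t)
    have h₂ := hM t
    rw [abs_of_nonpos (by linarith : r + t ≤ 0)] at h₁
    rw [abs_of_nonpos ht] at h₂
    linarith [abs_sub (ω (r + t)) (ω t)]
  calc |2 * δ * (ω (r + t) - ω t)| = 2 * δ * |ω (r + t) - ω t| := by
        rw [abs_mul, abs_of_nonneg (by positivity : 0 ≤ 2 * δ)]
    _ ≤ 2 * δ * (ε * (-r - 2 * t) + 2 * M) := by gcongr
    _ = 2 * δ * ε * (-r - 2 * t) + 4 * δ * M := by ring

lemma integrableOn_Iic_exp_mul_of_le {u β : ℝ → ℝ} (hu : Continuous u) (hβ : Continuous β)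
    {a C B : ℝ} (ha : 0 < a) (hub : ∀ r ≤ 0, u r ≤ a * r + C) (hβB : ∀ r, |β r| ≤ B) :
    IntegrableOn (fun r => exp (u r) * β r) (Iic 0) := by
  refine ((integrableOn_exp_mul_Iic ha 0).const_mul (exp C * B)).mono'
    (by fun_prop : Continuous fun r => exp (u r) * β r).aestronglyMeasurable ?_
  rw [ae_restrict_iff' measurableSet_Iic]
  refine ae_of_all _ fun r hr => ?_
  calc ‖exp (u r) * β r‖ = exp (u r) * |β r| := by
        rw [Real.norm_eq_abs, abs_mul, abs_of_pos (exp_pos _)]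
    _ ≤ exp (a * r + C) * B := by
        gcongr
        exacts [hub r hr, hβB r]
    _ = exp C * B * exp (a * r) := by rw [exp_add]; ring

lemma le_integral_exp_shift {ω β : ℝ → ℝ} (hωc : Continuous ω) (hβc : Continuous β)
    {lam δ ε M β₀ β₁ : ℝ} (hδ : 0 ≤ δ) (hε : 0 ≤ ε) (hκ : 2 * δ * ε < 2 * lam)
    (hM : ∀ s, |ω s| ≤ ε * |s| + M) (hβ₀ : 0 ≤ β₀) (hβl : ∀ s, β₀ ≤ β s) (hβu : ∀ s, β s ≤ β₁)
    (τ : ℝ) {t : ℝ} (ht : t ≤ 0) :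
    β₀ * exp (-(2 * lam + 2 * δ * ε + 4 * δ * M)) * exp (2 * δ * ε * t) ^ 2 ≤
      ∫ r in Iic 0, exp (2 * lam * r + 2 * δ * (ω (r + t) - ω t)) * β (r + τ) := by
  set f : ℝ → ℝ := fun r => exp (2 * lam * r + 2 * δ * (ω (r + t) - ω t)) * β (r + τ)
  have hf_int : IntegrableOn f (Iic 0) := by
    refine integrableOn_Iic_exp_mul_of_le (by fun_prop) (by fun_prop)
      (sub_pos.2 hκ) (C := -2 * (2 * δ * ε) * t + 4 * δ * M) (fun r hr => ?_)
      (fun s => abs_le.2 ⟨by linarith [hβl (s + τ), hβu (s + τ)], hβu (s + τ)⟩)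
    linarith [le_abs_self (2 * δ * (ω (r + t) - ω t)), abs_mul_sub_shift_le hδ hM hr ht]
  have hf_nonneg : ∀ r, 0 ≤ f r := fun r => mul_nonneg (exp_pos _).le (hβ₀.trans (hβl _))
  have hf_low : ∀ r ∈ Icc (-1 : ℝ) 0,
      β₀ * exp (-(2 * lam + 2 * δ * ε + 4 * δ * M)) * exp (2 * δ * ε * t) ^ 2 ≤ f r := by
    rintro r ⟨hr₁, hr₂⟩
    have hexp : -(2 * lam + 2 * δ * ε + 4 * δ * M) + 2 * (2 * δ * ε * t) ≤
        2 * lam * r + 2 * δ * (ω (r + t) - ω t) := by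
      nlinarith [neg_abs_le (2 * δ * (ω (r + t) - ω t)), abs_mul_sub_shift_le hδ hM hr₂ ht,
        mul_nonneg hδ hε]
    calc β₀ * exp (-(2 * lam + 2 * δ * ε + 4 * δ * M)) * exp (2 * δ * ε * t) ^ 2
        = exp (-(2 * lam + 2 * δ * ε + 4 * δ * M) + 2 * (2 * δ * ε * t)) * β₀ := by
          rw [exp_add, two_mul (2 * δ * ε * t), exp_add]; ring
      _ ≤ exp (2 * lam * r + 2 * δ * (ω (r + t) - ω t)) * β (r + τ) := by gcongr; exact hβl _
  calc β₀ * exp (-(2 * lam + 2 * δ * ε + 4 * δ * M)) * exp (2 * δ * ε * t) ^ 2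
      ≤ ∫ r in Icc (-1 : ℝ) 0, f r := by
        simpa using setIntegral_ge_of_const_le_real measurableSet_Icc (by simp) hf_low
          (hf_int.mono_set Icc_subset_Iic_self)
    _ ≤ ∫ r in Iic 0, f r :=
        setIntegral_mono_set hf_int (ae_of_all _ hf_nonneg) Icc_subset_Iic_self.eventuallyLE

lemma tendsto_exp_mul_mul_inv_sqrt_atBot {I : ℝ → ℝ} {c κ K : ℝ} (hK : 0 < K) (hκc : κ < c)
    (hI : ∀ᶠ t in atBot, K * exp (κ * t) ^ 2 ≤ I t) :
    Tendsto (fun t => exp (c * t) * (√(2 * I t))⁻¹) atBot (𝓝 0) := by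
  have hlim : Tendsto (fun t => exp ((c - κ) * t) * (√(2 * K))⁻¹) atBot (𝓝 0) := by
    simpa using (tendsto_exp_atBot.comp
      (tendsto_id.const_mul_atBot (sub_pos.2 hκc))).mul_const (√(2 * K))⁻¹
  refine squeeze_zero' (Eventually.of_forall fun t => by positivity) ?_ hlim
  filter_upwards [hI] with t ht
  have hsqrt : √(2 * K) * exp (κ * t) ≤ √(2 * I t) := by
    rw [← Real.sqrt_sq (exp_pos (κ * t)).le, ← Real.sqrt_mul (by positivity)]
    exact Real.sqrt_le_sqrt (by linarith)
  calc exp (c * t) * (√(2 * I t))⁻¹ ≤ exp (c * t) * (√(2 * K) * exp (κ * t))⁻¹ := by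
        gcongr
    _ = exp ((c - κ) * t) * (√(2 * K))⁻¹ := by
        rw [sub_mul, exp_sub]; field_simp

/-- Temperedness of the bifurcating branch x⁺_λ:
e^{ct} x⁺_λ(τ+t, θ_t ω) → 0 as t → -∞ for every c > 0. -/
theorem stmt3
    (ω : ℝ → ℝ) (hωc : Continuous ω)
    (hωtop : Tendsto (fun t => ω t / t) atTop (nhds 0))
    (hωbot : Tendsto (fun t => ω t / t) atBot (nhds 0))
    (lam δ β₀ β₁ : ℝ) (hlam : 0 < lam) (hδ : 0 < δ)
    (β : ℝ → ℝ) (hβc : Continuous β)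
    (hβ₀ : 0 < β₀) (hβl : ∀ t, β₀ ≤ β t) (hβu : ∀ t, β t ≤ β₁)
    (xplus : ℝ → (ℝ → ℝ) → ℝ)
    (hx : ∀ (τ : ℝ) (ω' : ℝ → ℝ),
      xplus τ ω' =
        (Real.sqrt (2 * ∫ r in Iic (0 : ℝ),
          Real.exp (2 * lam * r + 2 * δ * ω' r) * β (r + τ)))⁻¹) :
    ∀ c > (0 : ℝ), ∀ τ : ℝ,
      Tendsto (fun t => Real.exp (c * t) * xplus (τ + t) (fun s => ω (s + t) - ω t))
        atBot (nhds 0) := by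
  intro c hc τ
  set κ := min lam (c / 2)
  have hκ : 0 < κ := lt_min hlam (half_pos hc)
  have hκε : 2 * δ * (κ / (2 * δ)) = κ := by field_simp
  obtain ⟨M, hM⟩ := exists_abs_le_mul_abs_add hωc
    (by simpa only [cocompact_eq_atBot_atTop] using hωbot.sup hωtop)
    (by positivity : 0 < κ / (2 * δ))
  simp only [hx]
  refine tendsto_exp_mul_mul_inv_sqrt_atBot
    (by positivity : 0 < β₀ * exp (-(2 * lam + κ + 4 * δ * M)))
    ((min_le_right lam _).trans_lt (half_lt_self hc)) ?_
  filter_upwards [eventually_le_atBot 0] with t ht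
  simpa only [hκε] using le_integral_exp_shift hωc hβc hδ.le (by positivity)
    (by linarith [min_le_left lam (c / 2)]) hM hβ₀.le hβl hβu (τ + t) ht
end

section
/- Let ω: ℝ → ℝ be continuous with ω(t)/t → 0 as t → ±∞, δ > 0, and β continuous with 0 < β₀ ≤ β(t) ≤ β₁. For λ > 0, τ ∈ ℝ, and initial value x₀ > 0, the explicit solution x(τ, τ−t, θ_{−τ}ω, x₀) = x₀ / √(e^{−2λt + 2δω(−t)} + 2x₀² ∫_{−t}^0 e^{2λr + 2δω(r)} β(r+τ) dr) converges, as t → ∞, to x⁺_λ(τ,ω) = (2 ∫_{-∞}^0 e^{2λr + 2δω(r)} β(r+τ) dr)^{-1/2}. -/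
set_option autoImplicit false

open MeasureTheory Filter Real Set Topology Asymptotics

/-! Since `ω` is sublinear at `-∞`, the exponent `2λr + 2δω(r)` is eventually below `λr`, so the
integrand is dominated by `β₁ e^{λr}` near `-∞`: the integral over `(-∞, 0]` converges, is positive,
and is the limit of the integrals over `(-t, 0]`. The same sublinearity sends
`e^{-2λt + 2δω(-t)}` to `0`, and the limit of `x₀ / √(e^{…} + 2x₀² ∫_{-t}^0 …)` is then read off. -/

lemma tendsto_mul_add_atBot_of_div_tendsto_zero {g : ℝ → ℝ} {c : ℝ} (hc : 0 < c)
    (hg : Tendsto (fun r => g r / r) atBot (𝓝 0)) :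
    Tendsto (fun r => c * r + g r) atBot atBot := by
  have h : Tendsto (fun r => r * (c + g r / r)) atBot atBot :=
    tendsto_id.atBot_mul_pos hc (by simpa using hg.const_add c)
  refine h.congr' ?_
  filter_upwards [eventually_lt_atBot 0] with r hr
  rw [mul_add, mul_div_cancel₀ _ hr.ne, mul_comm]

lemma integrableOn_Iic_exp_mul_add {g : ℝ → ℝ} {c : ℝ} (a : ℝ) (hc : 0 < c) (hgc : Continuous g)
    (hg : Tendsto (fun r => g r / r) atBot (𝓝 0)) :
    IntegrableOn (fun r => exp (c * r + g r)) (Iic a) := by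
  have hle : ∀ᶠ r in atBot, c * r + g r ≤ c / 2 * r := by
    filter_upwards
      [(tendsto_mul_add_atBot_of_div_tendsto_zero (half_pos hc) hg).eventually_le_atBot 0] with r hr
    linarith
  have hloc : LocallyIntegrableOn (fun r => exp (c * r + g r)) (Iic a) :=
    (by fun_prop : Continuous fun r => exp (c * r + g r)).locallyIntegrable.locallyIntegrableOn _
  refine hloc.integrableOn_of_isBigO_atBot (g := fun r => exp (c / 2 * r)) (IsBigO.of_bound 1 ?_)
    ⟨Iic 0, Iic_mem_atBot 0, integrableOn_exp_mul_Iic (half_pos hc) 0⟩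
  filter_upwards [hle] with r hr
  simpa [Real.norm_eq_abs, abs_of_pos (exp_pos _)] using hr

lemma setIntegral_Iic_pos {f : ℝ → ℝ} {a : ℝ} (hf : ∀ r, 0 < f r) (hfi : IntegrableOn f (Iic a)) :
    0 < ∫ r in Iic a, f r := by
  rw [setIntegral_pos_iff_support_of_nonneg_ae (ae_of_all _ fun r => (hf r).le) hfi,
    inter_eq_right.2 fun r _ => Function.mem_support.2 (hf r).ne', Real.volume_Iic]
  exact ENNReal.zero_lt_top

lemma tendsto_setIntegral_Ioc_neg {E : Type*} [NormedAddCommGroup E] [NormedSpace ℝ E]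
    {f : ℝ → E} {a : ℝ} (hf : IntegrableOn f (Iic a)) :
    Tendsto (fun t => ∫ r in Ioc (-t) a, f r) atTop (𝓝 (∫ r in Iic a, f r)) := by
  refine (intervalIntegral_tendsto_integral_Iic a hf tendsto_neg_atTop_atBot).congr' ?_
  filter_upwards [eventually_ge_atTop (-a)] with t ht
  rw [intervalIntegral.integral_of_le (by linarith)]

lemma tendsto_div_sqrt_add_mul {α : Type*} {l : Filter α} {e J : α → ℝ} {x₀ I : ℝ}
    (hx₀ : 0 < x₀) (hI : 0 < I) (he : Tendsto e l (𝓝 0)) (hJ : Tendsto J l (𝓝 I)) :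
    Tendsto (fun t => x₀ / sqrt (e t + 2 * x₀ ^ 2 * J t)) l (𝓝 (sqrt (2 * I))⁻¹) := by
  have hlim : x₀ / sqrt (0 + 2 * x₀ ^ 2 * I) = (sqrt (2 * I))⁻¹ := by
    rw [zero_add, show 2 * x₀ ^ 2 * I = x₀ ^ 2 * (2 * I) by ring, sqrt_mul (sq_nonneg x₀),
      sqrt_sq hx₀.le, div_mul_eq_div_div, div_self hx₀.ne', one_div]
  rw [← hlim]
  exact tendsto_const_nhds.div ((he.add (hJ.const_mul _)).sqrt) (by positivity)

theorem stmt4_general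
    (ω : ℝ → ℝ) (hωc : Continuous ω)
    (hωbot : Tendsto (fun t => ω t / t) atBot (nhds 0))
    (lam δ β₀ β₁ : ℝ) (hlam : 0 < lam)
    (β : ℝ → ℝ) (hβc : Continuous β)
    (hβ₀ : 0 < β₀) (hβl : ∀ t, β₀ ≤ β t) (hβu : ∀ t, β t ≤ β₁)
    (τ x₀ : ℝ) (hx₀ : 0 < x₀) :
    Tendsto
      (fun t : ℝ =>
        x₀ / Real.sqrt (Real.exp (-2 * lam * t + 2 * δ * ω (-t)) +
          2 * x₀ ^ 2 *
            ∫ r in Ioc (-t) (0 : ℝ), Real.exp (2 * lam * r + 2 * δ * ω r) * β (r + τ)))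
      atTop
      (nhds ((Real.sqrt (2 * ∫ r in Iic (0 : ℝ),
        Real.exp (2 * lam * r + 2 * δ * ω r) * β (r + τ)))⁻¹)) := by
  have hδω : Tendsto (fun r => 2 * δ * ω r / r) atBot (𝓝 0) := by
    simpa [mul_div_assoc] using hωbot.const_mul (2 * δ)
  have hβpos : ∀ r, 0 < β r := fun r => hβ₀.trans_le (hβl r)
  have hint : IntegrableOn (fun r => exp (2 * lam * r + 2 * δ * ω r) * β (r + τ)) (Iic 0) :=
    (integrableOn_Iic_exp_mul_add 0 (by positivity) (by fun_prop) hδω).mul_bdd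
      (by fun_prop : Continuous fun r => β (r + τ)).aestronglyMeasurable
      (ae_of_all _ fun r => by
        rw [Real.norm_eq_abs, abs_of_pos (hβpos _)]
        exact hβu _)
  have hexp : Tendsto (fun t => exp (-2 * lam * t + 2 * δ * ω (-t))) atTop (𝓝 0) := by
    refine tendsto_exp_atBot.comp (((tendsto_mul_add_atBot_of_div_tendsto_zero
      (by positivity : 0 < 2 * lam) hδω).comp tendsto_neg_atTop_atBot).congr fun t => ?_)
    simp only [Function.comp_apply]
    ring
  exact tendsto_div_sqrt_add_mul hx₀
    (setIntegral_Iic_pos (fun r => mul_pos (exp_pos _) (hβpos _)) hint) hexp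
    (tendsto_setIntegral_Ioc_neg hint)

/-- Pullback convergence of the explicit solution with positive initial data
to the positive branch x⁺_λ(τ,ω). -/
theorem stmt4
    (ω : ℝ → ℝ) (hωc : Continuous ω)
    (hωtop : Tendsto (fun t => ω t / t) atTop (nhds 0))
    (hωbot : Tendsto (fun t => ω t / t) atBot (nhds 0))
    (lam δ β₀ β₁ : ℝ) (hlam : 0 < lam) (hδ : 0 < δ)
    (β : ℝ → ℝ) (hβc : Continuous β)
    (hβ₀ : 0 < β₀) (hβl : ∀ t, β₀ ≤ β t) (hβu : ∀ t, β t ≤ β₁)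
    (τ x₀ : ℝ) (hx₀ : 0 < x₀) :
    Tendsto
      (fun t : ℝ =>
        x₀ / Real.sqrt (Real.exp (-2 * lam * t + 2 * δ * ω (-t)) +
          2 * x₀ ^ 2 *
            ∫ r in Ioc (-t) (0 : ℝ), Real.exp (2 * lam * r + 2 * δ * ω r) * β (r + τ)))
      atTop
      (nhds ((Real.sqrt (2 * ∫ r in Iic (0 : ℝ),
        Real.exp (2 * lam * r + 2 * δ * ω r) * β (r + τ)))⁻¹)) :=
  stmt4_general ω hωc hωbot lam δ β₀ β₁ hlam β hβc hβ₀ hβl hβu τ x₀ hx₀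
end

section
/- Let ω: ℝ → ℝ be continuous with ∫_{−∞}^0 e^{2δω(r)} dr = ∞, δ > 0, and β continuous with β(t) ≥ β₀ > 0. For λ = 0, every solution with initial value x₀ ∈ ℝ satisfies |x(τ, τ−t, θ_{−τ}ω, x₀)| ≤ (2β₀ ∫_{−t}^0 e^{2δω(r)} dr)^{−1/2} → 0 as t → ∞. Hence the zero solution of dx/dt = −β(t)x³ + δx∘dω/dt is pullback attracting in ℝ. -/
set_option autoImplicit false

open MeasureTheory Filter Real Set

/-! Writing `I t = ∫_{-t}^0 e^{2δω}` and `J t = ∫_{-t}^0 e^{2δω(r)} β(r+τ) dr`, the lower bound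
`β ≥ β₀` gives `J t ≥ β₀ I t`, so dropping the first term under the square root yields
`|x t| ≤ |x₀| / √(2 x₀² β₀ I t) = (2 β₀ I t)^{-1/2}`. The divergence hypothesis says that
`I t → ∞` (monotone convergence for the measure with density `e^{2δω}`), so the bound tends to 0. -/

lemma tendsto_setIntegral_Ioc_neg_atTop {f : ℝ → ℝ} (hf : ∀ t, IntegrableOn f (Ioc (-t) 0))
    (hf_nonneg : ∀ r, 0 ≤ f r) (hdiv : ∫⁻ r in Iic (0 : ℝ), ENNReal.ofReal (f r) = ⊤) :
    Tendsto (fun t => ∫ r in Ioc (-t) (0 : ℝ), f r) atTop atTop := by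
  have hmono : Monotone fun t : ℝ => Ioc (-t) (0 : ℝ) :=
    fun s t hst => Ioc_subset_Ioc_left (neg_le_neg hst)
  have hunion : ⋃ t : ℝ, Ioc (-t) (0 : ℝ) = Iic 0 := by
    ext r
    simp only [mem_iUnion, mem_Ioc, mem_Iic]
    exact ⟨fun ⟨_, _, hr⟩ => hr, fun hr => ⟨-r + 1, by linarith, hr⟩⟩
  have hlim := tendsto_measure_iUnion_atTop
    (μ := volume.withDensity fun r => ENNReal.ofReal (f r)) hmono
  rw [hunion, withDensity_apply _ measurableSet_Iic, hdiv] at hlim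
  rw [← ENNReal.tendsto_ofReal_nhds_top]
  refine hlim.congr fun t => ?_
  rw [Function.comp_apply, withDensity_apply _ measurableSet_Ioc,
    ofReal_integral_eq_lintegral_ofReal (hf t) (Eventually.of_forall hf_nonneg)]

lemma abs_div_sqrt_add_le_inv_sqrt {a c k j : ℝ} (ha : 0 < a) (hk : 0 < k) (hkj : k ≤ c * j)
    (x₀ : ℝ) : |x₀ / √(a + c * x₀ ^ 2 * j)| ≤ (√k)⁻¹ := by
  rcases eq_or_ne x₀ 0 with rfl | hx₀
  · simp
  have hx₀sq : 0 < x₀ ^ 2 := by positivity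
  calc |x₀ / √(a + c * x₀ ^ 2 * j)| = |x₀| / √(a + c * x₀ ^ 2 * j) := by
        rw [abs_div, abs_of_nonneg (sqrt_nonneg _)]
    _ ≤ |x₀| / √(x₀ ^ 2 * k) := by
        gcongr
        nlinarith
    _ = (√k)⁻¹ := by
        rw [sqrt_mul hx₀sq.le, sqrt_sq_eq_abs, div_mul_cancel_left₀ (abs_ne_zero.2 hx₀)]

lemma setIntegral_Ioc_neg_pos {f : ℝ → ℝ} (hf : Continuous f) (hf_pos : ∀ r, 0 < f r) {t : ℝ}
    (ht : 0 < t) : 0 < ∫ r in Ioc (-t) (0 : ℝ), f r := by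
  rw [← intervalIntegral.integral_of_le (by linarith)]
  exact intervalIntegral.intervalIntegral_pos_of_pos_on (hf.intervalIntegrable _ _)
    (fun r _ => hf_pos r) (by linarith)

theorem stmt7_general
    (ω : ℝ → ℝ) (hωc : Continuous ω)
    (δ β₀ : ℝ) (hβ₀ : 0 < β₀)
    (hdiv : ∫⁻ r in Iic (0 : ℝ), ENNReal.ofReal (Real.exp (2 * δ * ω r)) = ⊤)
    (β : ℝ → ℝ) (hβc : Continuous β) (hβl : ∀ t, β₀ ≤ β t)
    (τ x₀ : ℝ)
    (x : ℝ → ℝ)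
    (hx : ∀ t : ℝ,
      x t = x₀ / Real.sqrt (Real.exp (2 * δ * ω (-t)) +
        2 * x₀ ^ 2 * ∫ r in Ioc (-t) (0 : ℝ), Real.exp (2 * δ * ω r) * β (r + τ))) :
    (∀ t > (0 : ℝ),
        |x t| ≤ (Real.sqrt (2 * β₀ * ∫ r in Ioc (-t) (0 : ℝ), Real.exp (2 * δ * ω r)))⁻¹) ∧
    Tendsto (fun t => (Real.sqrt (2 * β₀ *
        ∫ r in Ioc (-t) (0 : ℝ), Real.exp (2 * δ * ω r)))⁻¹) atTop (nhds 0) ∧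
    Tendsto x atTop (nhds 0) := by
  set I := fun t => ∫ r in Ioc (-t) (0 : ℝ), exp (2 * δ * ω r)
  have hfc : Continuous fun r => exp (2 * δ * ω r) := by fun_prop
  have hgc : Continuous fun r => exp (2 * δ * ω r) * β (r + τ) := by fun_prop
  have hJ_ge : ∀ t, β₀ * I t ≤ ∫ r in Ioc (-t) (0 : ℝ), exp (2 * δ * ω r) * β (r + τ) :=
    fun t => by
      rw [← integral_const_mul]
      exact setIntegral_mono (hfc.integrableOn_Ioc.const_mul β₀) hgc.integrableOn_Ioc
        fun r => by rw [mul_comm]; gcongr; exact hβl _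
  have hbound : ∀ t > (0 : ℝ), |x t| ≤ (√(2 * β₀ * I t))⁻¹ := fun t ht => by
    rw [hx t]
    exact abs_div_sqrt_add_le_inv_sqrt (exp_pos _)
      (by have := setIntegral_Ioc_neg_pos hfc (fun r => exp_pos _) ht; positivity)
      (by linarith [hJ_ge t]) x₀
  have hI_tendsto : Tendsto I atTop atTop :=
    tendsto_setIntegral_Ioc_neg_atTop (fun _ => hfc.integrableOn_Ioc)
      (fun r => (exp_pos _).le) hdiv
  have hbound_tendsto : Tendsto (fun t => (√(2 * β₀ * I t))⁻¹) atTop (nhds 0) :=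
    tendsto_inv_atTop_zero.comp
      (tendsto_sqrt_atTop.comp (hI_tendsto.const_mul_atTop (by positivity)))
  refine ⟨hbound, hbound_tendsto, ?_⟩
  rw [tendsto_zero_iff_abs_tendsto_zero]
  exact squeeze_zero' (Eventually.of_forall fun t => abs_nonneg _)
    ((eventually_gt_atTop 0).mono hbound) hbound_tendsto

/-- λ = 0 case: the pullback solution is bounded by (2β₀∫_{-t}^0 e^{2δω})^{-1/2},
which tends to 0, so the zero solution is pullback attracting. -/
theorem stmt7
    (ω : ℝ → ℝ) (hωc : Continuous ω)
    (δ β₀ : ℝ) (hδ : 0 < δ) (hβ₀ : 0 < β₀)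
    (hdiv : ∫⁻ r in Iic (0 : ℝ), ENNReal.ofReal (Real.exp (2 * δ * ω r)) = ⊤)
    (β : ℝ → ℝ) (hβc : Continuous β) (hβl : ∀ t, β₀ ≤ β t)
    (τ x₀ : ℝ)
    (x : ℝ → ℝ)
    (hx : ∀ t : ℝ,
      x t = x₀ / Real.sqrt (Real.exp (2 * δ * ω (-t)) +
        2 * x₀ ^ 2 * ∫ r in Ioc (-t) (0 : ℝ), Real.exp (2 * δ * ω r) * β (r + τ))) :
    (∀ t > (0 : ℝ),
        |x t| ≤ (Real.sqrt (2 * β₀ * ∫ r in Ioc (-t) (0 : ℝ), Real.exp (2 * δ * ω r)))⁻¹) ∧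
    Tendsto (fun t => (Real.sqrt (2 * β₀ *
        ∫ r in Ioc (-t) (0 : ℝ), Real.exp (2 * δ * ω r)))⁻¹) atTop (nhds 0) ∧
    Tendsto x atTop (nhds 0) :=
  stmt7_general ω hωc δ β₀ hβ₀ hdiv β hβc hβl τ x₀ x hx
end

section
/- Let ω: ℝ → ℝ be continuous with ∫_{−∞}^0 e^{2δω(r)} dr = ∞ and ω(t)/t → 0 as t → ±∞, δ > 0, and β continuous with 0 < β₀ ≤ β ≤ β₁. Define for λ > 0: x⁺_λ(τ) = (2∫_{−∞}^0 e^{2λr + 2δω(r)} β(r+τ) dr)^{−1/2}. Then for every τ ∈ ℝ, x⁺_λ(τ) → 0 as λ → 0⁺. -/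
open MeasureTheory Filter Real Set Topology Asymptotics

/-! At `λ = 0` the integrand is `e^{2δω(r)} β(r+τ) ≥ β₀ e^{2δω(r)}`, whose integral over `(-∞, 0]`
diverges, so already its integral over a long window `[-n, 0]` is as large as we like. On a compact
window the integral depends continuously on `λ`, so for small `λ > 0` the integral over `(-∞, 0]`,
which dominates the windowed one, is large as well, and `x⁺_λ(τ) = (2 ∫ …)^{-1/2} → 0`. -/

theorem tendsto_setIntegral_Icc_neg_nat_atTop {g : ℝ → ℝ} (hg : Continuous g)
    (hg_nonneg : ∀ r, 0 ≤ g r) (hdiv : ∫⁻ r in Iic (0 : ℝ), ENNReal.ofReal (g r) = ⊤) :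
    Tendsto (fun n : ℕ => ∫ r in Icc (-(n : ℝ)) 0, g r) atTop atTop := by
  set ν := volume.withDensity fun r => ENNReal.ofReal (g r)
  have hν : ∀ n : ℕ, ν (Icc (-(n : ℝ)) 0) = ENNReal.ofReal (∫ r in Icc (-(n : ℝ)) 0, g r) :=
    fun n => by
      rw [withDensity_apply _ measurableSet_Icc,
        ofReal_integral_eq_lintegral_ofReal hg.integrableOn_Icc (ae_of_all _ hg_nonneg)]
  have hunion : ⋃ n : ℕ, Icc (-(n : ℝ)) 0 = Iic 0 := by
    ext r
    simp only [mem_iUnion, mem_Icc, mem_Iic]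
    exact ⟨fun ⟨_, hr⟩ => hr.2, fun hr => (exists_nat_ge (-r)).imp fun _ hn => ⟨by linarith, hr⟩⟩
  have hmono : Monotone fun n : ℕ => Icc (-(n : ℝ)) 0 := fun m n hmn =>
    Icc_subset_Icc (neg_le_neg (Nat.cast_le.2 hmn)) le_rfl
  have := tendsto_measure_iUnion_atTop (μ := ν) hmono
  rw [hunion, withDensity_apply _ measurableSet_Iic, hdiv] at this
  simpa only [Function.comp_def, hν, ENNReal.tendsto_ofReal_nhds_top] using this

theorem isBigO_atBot_exp_mul_add_mul {ω : ℝ → ℝ}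
    (hω : Tendsto (fun t => ω t / t) atBot (𝓝 0)) (c : ℝ) {lam : ℝ} (hlam : 0 < lam) :
    (fun r => exp (lam * r + c * ω r)) =O[atBot] fun r => exp (lam / 2 * r) := by
  have hsmall : ∀ᶠ t in atBot, |c * (ω t / t)| < lam / 2 := by
    have hcω := hω.const_mul c
    rw [mul_zero] at hcω
    simpa using hcω.eventually (eventually_abs_sub_lt 0 (half_pos hlam))
  refine IsBigO.of_bound 1 ?_
  filter_upwards [hsmall, eventually_lt_atBot 0] with r hr hr0
  rw [one_mul, norm_of_nonneg (exp_pos _).le, norm_of_nonneg (exp_pos _).le, exp_le_exp]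
  rw [mul_div_assoc', abs_div, abs_of_neg hr0, div_lt_iff₀ (neg_pos.2 hr0)] at hr
  linarith [le_abs_self (c * ω r)]

theorem tendsto_setIntegral_Iic_atTop {X : Type*} [TopologicalSpace X]
    [FirstCountableTopology X] [LocallyCompactSpace X] {F : X → ℝ → ℝ}
    (hF : Continuous F.uncurry) (hF_nonneg : ∀ x r, 0 ≤ F x r) {s : Set X}
    (hF_int : ∀ x ∈ s, IntegrableOn (F x) (Iic 0)) {x₀ : X}
    (hdiv : Tendsto (fun n : ℕ => ∫ r in Icc (-(n : ℝ)) 0, F x₀ r) atTop atTop) :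
    Tendsto (fun x => ∫ r in Iic 0, F x r) (𝓝[s] x₀) atTop := by
  refine tendsto_atTop.2 fun b => ?_
  obtain ⟨n, hn⟩ := (hdiv.eventually_gt_atTop b).exists
  have hwindow : ∀ᶠ x in 𝓝 x₀, b < ∫ r in Icc (-(n : ℝ)) 0, F x r :=
    (continuous_parametric_integral_of_continuous hF isCompact_Icc).continuousAt.eventually
      (lt_mem_nhds hn)
  filter_upwards [nhdsWithin_le_nhds hwindow, self_mem_nhdsWithin] with x hx hxs
  exact hx.le.trans <| setIntegral_mono_set (hF_int x hxs) (ae_of_all _ (hF_nonneg x))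
    (Icc_subset_Iic_self.eventuallyLE)

theorem stmt8_general
    (ω : ℝ → ℝ) (hωc : Continuous ω)
    (hωbot : Tendsto (fun t => ω t / t) atBot (nhds 0))
    (δ β₀ β₁ : ℝ)
    (hdiv : ∫⁻ r in Iic (0 : ℝ), ENNReal.ofReal (Real.exp (2 * δ * ω r)) = ⊤)
    (β : ℝ → ℝ) (hβc : Continuous β)
    (hβ₀ : 0 < β₀) (hβl : ∀ t, β₀ ≤ β t) (hβu : ∀ t, β t ≤ β₁)
    (τ : ℝ) :
    Tendsto
      (fun lam : ℝ =>
        (Real.sqrt (2 * ∫ r in Iic (0 : ℝ),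
          Real.exp (2 * lam * r + 2 * δ * ω r) * β (r + τ)))⁻¹)
      (nhdsWithin 0 (Ioi 0)) (nhds 0) := by
  set F : ℝ → ℝ → ℝ := fun lam r => exp (2 * lam * r + 2 * δ * ω r) * β (r + τ)
  have hF : Continuous F.uncurry := by fun_prop
  have hβ_pos : ∀ t, 0 < β t := fun t => hβ₀.trans_le (hβl t)
  have hF_nonneg : ∀ lam r, 0 ≤ F lam r := fun lam r =>
    mul_nonneg (exp_pos _).le (hβ_pos _).le
  have hF_int : ∀ lam ∈ Ioi (0 : ℝ), IntegrableOn (F lam) (Iic 0) := by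
    intro lam hlam
    have hβ_bdd : (fun r => β (r + τ)) =O[atBot] fun _ => (1 : ℝ) :=
      .of_bound β₁ <| .of_forall fun r => by
        rw [norm_of_nonneg (hβ_pos _).le, norm_one, mul_one]; exact hβu _
    have hF_lam : Continuous (F lam) := by fun_prop
    refine hF_lam.locallyIntegrable.locallyIntegrableOn _ |>.integrableOn_of_isBigO_atBot
      ((isBigO_atBot_exp_mul_add_mul hωbot (2 * δ) (mul_pos two_pos hlam)).mul hβ_bdd) ?_
    simpa using ⟨Iic 0, Iic_mem_atBot 0, integrableOn_exp_mul_Iic hlam 0⟩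
  have hF_zero : Tendsto (fun n : ℕ => ∫ r in Icc (-(n : ℝ)) 0, F 0 r) atTop atTop := by
    refine tendsto_atTop_mono (fun n => ?_) ((tendsto_setIntegral_Icc_neg_nat_atTop
      (by fun_prop) (fun r => (exp_pos _).le) hdiv).const_mul_atTop hβ₀)
    rw [← integral_const_mul]
    refine setIntegral_mono_on (Continuous.integrableOn_Icc (by fun_prop))
      (Continuous.integrableOn_Icc (by fun_prop)) measurableSet_Icc fun r _ => ?_
    simp only [F, mul_zero, zero_mul, zero_add, mul_comm β₀]
    exact mul_le_mul_of_nonneg_left (hβl _) (exp_pos _).le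
  exact (tendsto_sqrt_atTop.comp ((tendsto_setIntegral_Iic_atTop hF hF_nonneg hF_int
    hF_zero).const_mul_atTop two_pos)).inv_tendsto_atTop

/-- Pitchfork bifurcation: the branch x⁺_λ(τ) tends to 0 as λ → 0⁺. -/
theorem stmt8
    (ω : ℝ → ℝ) (hωc : Continuous ω)
    (hωtop : Tendsto (fun t => ω t / t) atTop (nhds 0))
    (hωbot : Tendsto (fun t => ω t / t) atBot (nhds 0))
    (δ β₀ β₁ : ℝ) (hδ : 0 < δ)
    (hdiv : ∫⁻ r in Iic (0 : ℝ), ENNReal.ofReal (Real.exp (2 * δ * ω r)) = ⊤)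
    (β : ℝ → ℝ) (hβc : Continuous β)
    (hβ₀ : 0 < β₀) (hβl : ∀ t, β₀ ≤ β t) (hβu : ∀ t, β t ≤ β₁)
    (τ : ℝ) :
    Tendsto
      (fun lam : ℝ =>
        (Real.sqrt (2 * ∫ r in Iic (0 : ℝ),
          Real.exp (2 * lam * r + 2 * δ * ω r) * β (r + τ)))⁻¹)
      (nhdsWithin 0 (Ioi 0)) (nhds 0) :=
  stmt8_general ω hωc hωbot δ β₀ β₁ hdiv β hβc hβ₀ hβl hβu τ
end

section
/- Let ω: ℝ → ℝ be continuous with ω(t)/t → 0 as t → ±∞, λ > 0, δ > 0, and suppose β: ℝ → ℝ is continuous, almost automorphic, and satisfies 0 < β₀ ≤ β(t) ≤ β₁ for all t. Then x⁺_λ(τ) = (2∫_{−∞}^0 e^{2λr + 2δω(r)} β(r+τ) dr)^{−1/2} is almost automorphic in τ. -/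
set_option autoImplicit false

open MeasureTheory Filter Real Set

/-- Almost automorphy: every sequence has a subsequence along which the
translates converge pointwise to a function whose back-translates converge
back to f. -/
def AlmostAutomorphic (f : ℝ → ℝ) : Prop :=
  ∀ s : ℕ → ℝ, ∃ φ : ℕ → ℕ, StrictMono φ ∧ ∃ h : ℝ → ℝ,
    (∀ t : ℝ, Tendsto (fun m => f (t + s (φ m))) atTop (nhds (h t))) ∧
    (∀ t : ℝ, Tendsto (fun m => h (t - s (φ m))) atTop (nhds (f t)))

/-!
The map τ ↦ x⁺_λ(τ) has the form τ ↦ T(β(· + τ)) with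
T g = (√(2 ∫_{r ≤ 0} w(r) g(r) dr))⁻¹ and w(r) = e^{2λr + 2δω(r)}. Since ω(r) = o(r) at −∞,
w is integrable, so by dominated convergence T is continuous along pointwise convergent
sequences of measurable functions with values in [β₀, β₁]; the lower bound β₀ > 0 keeps the
integral away from 0, where x ↦ (√(2x))⁻¹ blows up. Any such T preserves almost automorphy:
the limit h of the translates of β is again measurable with values in [β₀, β₁].
-/

lemma eventually_mul_le_of_tendsto_div_atBot {ω : ℝ → ℝ}
    (hω : Tendsto (fun t => ω t / t) atBot (nhds 0)) (b : ℝ) {ε : ℝ} (hε : 0 < ε) :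
    ∀ᶠ t in atBot, b * ω t ≤ -ε * t := by
  have hlim : Tendsto (fun t => b * (ω t / t)) atBot (nhds 0) := by
    simpa using hω.const_mul b
  filter_upwards [hlim.eventually_const_lt (neg_neg_of_pos hε), eventually_lt_atBot 0]
    with t hbω ht
  calc b * ω t = b * (ω t / t) * t := by field_simp [ht.ne]
    _ ≤ -ε * t := mul_le_mul_of_nonpos_right hbω.le ht.le

lemma integrableOn_Iic_exp_of_eventually_le {g : ℝ → ℝ} (hg : Continuous g) {c : ℝ}
    (hc : 0 < c) (hgc : ∀ᶠ r in atBot, g r ≤ c * r) (a : ℝ) :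
    IntegrableOn (fun r => exp (g r)) (Iic a) := by
  obtain ⟨M, hM⟩ := eventually_atBot.mp hgc
  have hexp : Continuous fun r => exp (g r) := by fun_prop
  rw [← Iic_union_Icc_eq_Iic (min_le_right M a)]
  refine IntegrableOn.union ?_ hexp.integrableOn_Icc
  refine (integrableOn_exp_mul_Iic hc _).mono' hexp.aestronglyMeasurable ?_
  filter_upwards [ae_restrict_mem measurableSet_Iic] with r hr
  rw [norm_of_nonneg (exp_pos _).le]
  exact exp_le_exp.mpr (hM r (hr.trans (min_le_left M a)))

lemma tendsto_integral_mul_of_tendsto {α : Type*} [MeasurableSpace α] {μ : Measure α}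
    {w : α → ℝ} (hw : Integrable w μ) {g : ℕ → α → ℝ} {G : α → ℝ} {B : ℝ}
    (hgm : ∀ m, AEStronglyMeasurable (g m) μ) (hgB : ∀ m x, ‖g m x‖ ≤ B)
    (hgG : ∀ x, Tendsto (fun m => g m x) atTop (nhds (G x))) :
    Tendsto (fun m => ∫ x, w x * g m x ∂μ) atTop (nhds (∫ x, w x * G x ∂μ)) := by
  refine tendsto_integral_of_dominated_convergence (fun x => ‖w x‖ * B)
    (fun m => hw.aestronglyMeasurable.mul (hgm m)) (hw.norm.mul_const B) (fun m => ?_)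
    (ae_of_all _ fun x => (hgG x).const_mul (w x))
  refine ae_of_all _ fun x => ?_
  rw [norm_mul]
  exact mul_le_mul_of_nonneg_left (hgB m x) (norm_nonneg _)

lemma tendsto_inv_sqrt_integral_mul {α : Type*} [MeasurableSpace α] {μ : Measure α}
    {w : α → ℝ} (hw : Integrable w μ) (hw₀ : ∀ x, 0 ≤ w x) (hw_pos : 0 < ∫ x, w x ∂μ)
    {a b : ℝ} (ha : 0 < a) {g : ℕ → α → ℝ} {G : α → ℝ} (hgm : ∀ m, Measurable (g m))
    (hg : ∀ m x, g m x ∈ Icc a b) (hgG : ∀ x, Tendsto (fun m => g m x) atTop (nhds (G x))) :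
    Tendsto (fun m => (√(2 * ∫ x, w x * g m x ∂μ))⁻¹) atTop
      (nhds (√(2 * ∫ x, w x * G x ∂μ))⁻¹) := by
  have hgb : ∀ m x, ‖g m x‖ ≤ b := fun m x => by
    rw [norm_of_nonneg (ha.le.trans (hg m x).1)]
    exact (hg m x).2
  have hlim := tendsto_integral_mul_of_tendsto hw (fun m => (hgm m).aestronglyMeasurable) hgb hgG
  have hlower : ∀ m, a * ∫ x, w x ∂μ ≤ ∫ x, w x * g m x ∂μ := fun m => by
    rw [← integral_const_mul]
    refine integral_mono (hw.const_mul a)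
      (hw.mul_bdd (hgm m).aestronglyMeasurable (ae_of_all _ (hgb m))) fun x => ?_
    rw [mul_comm]
    exact mul_le_mul_of_nonneg_left (hg m x).1 (hw₀ x)
  have hpos : 0 < ∫ x, w x * G x ∂μ :=
    (mul_pos ha hw_pos).trans_le (ge_of_tendsto' hlim hlower)
  exact ((hlim.const_mul 2).sqrt).inv₀ (by positivity)

theorem AlmostAutomorphic.comp_translate {β : ℝ → ℝ} (hβ : AlmostAutomorphic β)
    (hβm : Measurable β) {a b : ℝ} (hβab : ∀ t, β t ∈ Icc a b) (T : (ℝ → ℝ) → ℝ)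
    (hT : ∀ (g : ℕ → ℝ → ℝ) (G : ℝ → ℝ), (∀ m, Measurable (g m)) →
      (∀ m x, g m x ∈ Icc a b) → (∀ x, Tendsto (fun m => g m x) atTop (nhds (G x))) →
      Tendsto (fun m => T (g m)) atTop (nhds (T G))) :
    AlmostAutomorphic fun τ => T fun r => β (r + τ) := by
  intro s
  obtain ⟨φ, hφ, h, hβh, hhβ⟩ := hβ s
  have hhm : Measurable h := measurable_of_tendsto_metrizable
    (fun m => hβm.comp (measurable_add_const _)) (tendsto_pi_nhds.mpr hβh)
  have hhab : ∀ t, h t ∈ Icc a b := fun t =>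
    isClosed_Icc.mem_of_tendsto (hβh t) (Eventually.of_forall fun m => hβab _)
  refine ⟨φ, hφ, fun τ => T fun r => h (r + τ), fun t => ?_, fun t => ?_⟩
  · exact hT _ _ (fun m => hβm.comp (measurable_add_const _)) (fun m x => hβab _)
      (fun x => by simpa only [add_assoc] using hβh (x + t))
  · exact hT _ _ (fun m => hhm.comp (measurable_add_const _)) (fun m x => hhab _)
      (fun x => by simpa only [add_sub_assoc] using hhβ (x + t))

theorem stmt11_general
    (ω : ℝ → ℝ) (hωc : Continuous ω)
    (hωbot : Tendsto (fun t => ω t / t) atBot (nhds 0))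
    (lam δ β₀ β₁ : ℝ) (hlam : 0 < lam)
    (β : ℝ → ℝ) (hβc : Continuous β)
    (hβ₀ : 0 < β₀) (hβl : ∀ t, β₀ ≤ β t) (hβu : ∀ t, β t ≤ β₁)
    (hβaa : AlmostAutomorphic β) :
    AlmostAutomorphic
      (fun τ => (Real.sqrt (2 * ∫ r in Iic (0 : ℝ),
        Real.exp (2 * lam * r + 2 * δ * ω r) * β (r + τ)))⁻¹) := by
  have hweight : IntegrableOn (fun r => exp (2 * lam * r + 2 * δ * ω r)) (Iic 0) := by
    refine integrableOn_Iic_exp_of_eventually_le (by fun_prop) hlam ?_ 0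
    filter_upwards [eventually_mul_le_of_tendsto_div_atBot hωbot (2 * δ) hlam] with r hr
    linarith
  have : NeZero (volume.restrict (Iic (0 : ℝ))) := ⟨by simp⟩
  exact hβaa.comp_translate hβc.measurable (fun t => ⟨hβl t, hβu t⟩)
    (fun g => (√(2 * ∫ r in Iic (0 : ℝ), exp (2 * lam * r + 2 * δ * ω r) * g r))⁻¹)
    fun g G hgm hg hgG => tendsto_inv_sqrt_integral_mul hweight (fun r => (exp_pos _).le)
      (integral_exp_pos hweight) hβ₀ hgm hg hgG

/-- If β is almost automorphic, so is the branch
x⁺_λ(τ) = (2∫_{-∞}^0 e^{2λr+2δω(r)} β(r+τ) dr)^{-1/2}. -/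
theorem stmt11
    (ω : ℝ → ℝ) (hωc : Continuous ω)
    (hωtop : Tendsto (fun t => ω t / t) atTop (nhds 0))
    (hωbot : Tendsto (fun t => ω t / t) atBot (nhds 0))
    (lam δ β₀ β₁ : ℝ) (hlam : 0 < lam) (hδ : 0 < δ)
    (β : ℝ → ℝ) (hβc : Continuous β)
    (hβ₀ : 0 < β₀) (hβl : ∀ t, β₀ ≤ β t) (hβu : ∀ t, β t ≤ β₁)
    (hβaa : AlmostAutomorphic β) :
    AlmostAutomorphic
      (fun τ => (Real.sqrt (2 * ∫ r in Iic (0 : ℝ),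
        Real.exp (2 * lam * r + 2 * δ * ω r) * β (r + τ)))⁻¹) :=
  stmt11_general ω hωc hωbot lam δ β₀ β₁ hlam β hβc hβ₀ hβl hβu hβaa
end

section
/- Let f: ℝ × ℝ → ℝ satisfy f(t,x)·x ≤ −ν x² + h(t)|x| for all t, x, with ν > 0 and h ≥ 0. Consider pathwise solutions of dx/dt = f(t,x) + g(t) + δx∘dω/dt and of the linear equation dy/dt = −νy + |g(t)| + h(t) + δy∘dω/dt (both interpreted, after the substitution removing the noise via z = e^{−δω(t)}x, as random ODEs). If y(τ) ≥ |x(τ)| ≥ 0, then |x(t)| ≤ y(t) for all t ≥ τ. -/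
open Set

/-!
After the substitution the noise only enters through the positive factor `e = exp (-δ ω)`, and
`u = e x`, `v = e y` are differentiable. The drift condition on `f` says that `|u|`
decays strictly faster than `v` wherever `|u| > v ≥ 0`, and a fencing argument (with `v + ε` as
the barrier) propagates `|u| ≤ v` forward from `τ`. That `v` stays nonnegative is the same
argument applied to `-v` and the barrier `0`.
-/

theorem image_le_of_deriv_lt_deriv_above {f f' B B' : ℝ → ℝ} {a b : ℝ}
    (hf : ∀ t ∈ Icc a b, HasDerivAt f (f' t) t) (hB : ∀ t ∈ Icc a b, HasDerivAt B (B' t) t)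
    (ha : f a ≤ B a) (hlt : ∀ t ∈ Ico a b, B t < f t → f' t < B' t) :
    ∀ t ∈ Icc a b, f t ≤ B t := by
  intro t ht
  refine le_of_forall_pos_le_add fun ε hε => ?_
  exact image_le_of_deriv_right_lt_deriv_boundary' (B := fun s => B s + ε)
    (fun s hs => (hf s hs).continuousAt.continuousWithinAt)
    (fun s hs => (hf s (Ico_subset_Icc_self hs)).hasDerivWithinAt) (by linarith)
    (fun s hs => ((hB s hs).add_const ε).continuousAt.continuousWithinAt)
    (fun s hs => ((hB s (Ico_subset_Icc_self hs)).add_const ε).hasDerivWithinAt)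
    (fun s hs hfs => hlt s hs (by linarith)) ht

theorem abs_le_of_sign_mul_deriv_lt_deriv {u u' v v' : ℝ → ℝ} {a b : ℝ}
    (hu : ∀ t ∈ Icc a b, HasDerivAt u (u' t) t) (hv : ∀ t ∈ Icc a b, HasDerivAt v (v' t) t)
    (hv₀ : ∀ t ∈ Icc a b, 0 ≤ v t) (ha : |u a| ≤ v a)
    (hlt : ∀ t ∈ Ico a b, v t < |u t| → SignType.sign (u t) * u' t < v' t) :
    ∀ t ∈ Icc a b, |u t| ≤ v t := by
  intro t ht
  refine abs_le'.2 ⟨?_, ?_⟩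
  · refine image_le_of_deriv_lt_deriv_above hu hv ((le_abs_self _).trans ha)
      (fun s hs hvu => ?_) t ht
    have hpos : 0 < u s := (hv₀ s (Ico_subset_Icc_self hs)).trans_lt hvu
    simpa [sign_pos hpos, abs_of_pos hpos, hvu] using hlt s hs
  · refine image_le_of_deriv_lt_deriv_above (fun s hs => (hu s hs).neg) hv
      ((neg_le_abs _).trans ha) (fun s hs (hvu : v s < -u s) => ?_) t ht
    have hneg : u s < 0 := by linarith [hv₀ s (Ico_subset_Icc_self hs)]
    simpa [sign_neg hneg, abs_of_neg hneg, hvu] using hlt s hs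

theorem nonneg_of_deriv_pos_of_neg {v v' : ℝ → ℝ} {a b : ℝ}
    (hv : ∀ t ∈ Icc a b, HasDerivAt v (v' t) t) (ha : 0 ≤ v a)
    (hpos : ∀ t ∈ Ico a b, v t < 0 → 0 < v' t) : ∀ t ∈ Icc a b, 0 ≤ v t := by
  intro t ht
  have := image_le_of_deriv_lt_deriv_above (B := fun _ => 0) (B' := fun _ => 0)
    (fun s hs => (hv s hs).neg) (fun s _ => hasDerivAt_const s (0 : ℝ)) (neg_nonpos.2 ha)
    (fun s hs (hvs : 0 < -v s) => neg_neg_iff_pos.2 (hpos s hs (neg_pos.1 hvs))) t ht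
  exact neg_nonpos.1 this

theorem sign_mul_le_abs {x : ℝ} (hx : x ≠ 0) (b : ℝ) : SignType.sign x * b ≤ |b| := by
  rcases hx.lt_or_gt with hneg | hpos
  · simpa [sign_neg hneg] using neg_le_abs b
  · simpa [sign_pos hpos] using le_abs_self b

theorem sign_mul_add_le_of_mul_le {a b x ν c : ℝ} (hx : x ≠ 0)
    (h : a * x ≤ -ν * x ^ 2 + c * |x|) : SignType.sign x * (a + b) ≤ -ν * |x| + c + |b| := by
  have hx' : 0 < |x| := abs_pos.2 hx
  have ha : SignType.sign x * a ≤ -ν * |x| + c := by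
    refine le_of_mul_le_mul_right ?_ hx'
    calc SignType.sign x * a * |x| = a * x := by rw [mul_right_comm, sign_mul_abs, mul_comm]
      _ ≤ -ν * x ^ 2 + c * |x| := h
      _ = (-ν * |x| + c) * |x| := by rw [← sq_abs]; ring
  linarith [sign_mul_le_abs hx b]

theorem stmt17_general
    (ω : ℝ → ℝ)
    (ν δ : ℝ) (hν : 0 < ν)
    (f : ℝ → ℝ → ℝ) (g h : ℝ → ℝ) (hhpos : ∀ t, 0 ≤ h t)
    (hf : ∀ t x : ℝ, f t x * x ≤ -ν * x ^ 2 + h t * |x|)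
    (τ : ℝ) (x y : ℝ → ℝ)
    (hx : ∀ t : ℝ, HasDerivAt (fun s => Real.exp (-δ * ω s) * x s)
      (Real.exp (-δ * ω t) * (f t (x t) + g t)) t)
    (hy : ∀ t : ℝ, HasDerivAt (fun s => Real.exp (-δ * ω s) * y s)
      (Real.exp (-δ * ω t) * (-ν * y t + |g t| + h t)) t)
    (hinit : |x τ| ≤ y τ) :
    ∀ t ≥ τ, |x t| ≤ y t := by
  intro T hT
  have he : ∀ s, 0 < Real.exp (-δ * ω s) := fun s => Real.exp_pos _
  have habs : ∀ s, |Real.exp (-δ * ω s) * x s| = Real.exp (-δ * ω s) * |x s| := fun s => by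
    rw [abs_mul, abs_of_pos (he s)]
  have hv₀ : ∀ s ∈ Icc τ T, 0 ≤ Real.exp (-δ * ω s) * y s := by
    refine nonneg_of_deriv_pos_of_neg (fun s _ => hy s)
      (mul_nonneg (he τ).le ((abs_nonneg _).trans hinit)) fun r _ hr => mul_pos (he r) ?_
    have hyr : y r < 0 := neg_of_mul_neg_right hr (he r).le
    linarith [mul_pos hν (neg_pos.2 hyr), abs_nonneg (g r), hhpos r]
  have hdrift : ∀ s ∈ Icc τ T, y s < |x s| →
      SignType.sign (x s) * (f s (x s) + g s) < -ν * y s + |g s| + h s := by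
    intro s hs hyx
    have hy₀ : 0 ≤ y s := nonneg_of_mul_nonneg_right (hv₀ s hs) (he s)
    have hxs : x s ≠ 0 := abs_pos.1 (hy₀.trans_lt hyx)
    linarith [sign_mul_add_le_of_mul_le (b := g s) hxs (hf s (x s)),
      mul_lt_mul_of_pos_left hyx hν]
  have hux := abs_le_of_sign_mul_deriv_lt_deriv (fun s _ => hx s) (fun s _ => hy s) hv₀
    (by rw [habs]; exact mul_le_mul_of_nonneg_left hinit (he τ).le) (fun s hs hlt => ?_)
    T ⟨hT, le_rfl⟩
  · rw [habs] at hux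
    exact le_of_mul_le_mul_left hux (he T)
  rw [habs] at hlt
  rw [sign_mul, sign_pos (he s), SignType.coe_mul, SignType.coe_one, one_mul,
    mul_left_comm]
  exact mul_lt_mul_of_pos_left (hdrift s (Ico_subset_Icc_self hs)
    (lt_of_mul_lt_mul_left hlt (he s).le)) (he s)

/-- Comparison principle: after the Doss–Sussmann transformation
z = e^{-δω}x, the solution of the linear equation dominates the absolute
value of the solution of the nonlinear equation. -/
theorem stmt17
    (ω : ℝ → ℝ) (hωc : Continuous ω)
    (ν δ : ℝ) (hν : 0 < ν) (hδ : 0 < δ)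
    (f : ℝ → ℝ → ℝ) (g h : ℝ → ℝ) (hhpos : ∀ t, 0 ≤ h t)
    (hf : ∀ t x : ℝ, f t x * x ≤ -ν * x ^ 2 + h t * |x|)
    (τ : ℝ) (x y : ℝ → ℝ)
    (hx : ∀ t : ℝ, HasDerivAt (fun s => Real.exp (-δ * ω s) * x s)
      (Real.exp (-δ * ω t) * (f t (x t) + g t)) t)
    (hy : ∀ t : ℝ, HasDerivAt (fun s => Real.exp (-δ * ω s) * y s)
      (Real.exp (-δ * ω t) * (-ν * y t + |g t| + h t)) t)
    (hinit : |x τ| ≤ y τ) :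
    ∀ t ≥ τ, |x t| ≤ y t :=
  stmt17_general ω ν δ hν f g h hhpos hf τ x y hx hy hinit
end

section
/- Let ω: ℝ → ℝ be continuous with ω(t)/t → 0 as t → ±∞, δ > 0, λ < 0, and β continuous with 0 < β₀ ≤ β ≤ β₁. Then for every τ ∈ ℝ and every compact K ⊂ (0, ∞), sup_{x₀ ∈ K} x(τ, τ−t, θ_{−τ}ω, x₀) → 0 as t → ∞, where x(τ, τ−t, θ_{−τ}ω, x₀) = x₀ / (e^{−λt + δω(−t)} + x₀ ∫_{−t}^0 e^{λr + δω(r)} β(r+τ) dr). Moreover, defining x_λ(τ, ω) = −(∫_0^∞ e^{λr + δω(r)} β(r+τ) dr)^{−1} < 0, one has x_λ(τ, ω) → 0 as λ → 0⁻ provided ∫_0^∞ e^{δω(r)} dr = ∞. -/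
/-!
Since `ω` is sublinear, for `λ < 0` the exponent `λ r + δ ω(r)` is controlled by its linear part:
it is nonnegative near `-∞`, so the pullback integral `B(t) = ∫_{-t}^0 …` grows at least linearly
and `x₀ / (e^{…} + x₀ B(t)) ≤ 1 / B(t)` tends to `0` uniformly in `x₀ > 0`; and it is at most
`λ r / 2` near `+∞`, so the forward integral defining `x_λ` converges. As `λ ↑ 0`, on a fixed
window `[0, T]` the factor `e^{λ r}` is eventually `≥ 1/2`, so the forward integral eventually
exceeds `(β₀ / 2) ∫_0^T e^{δ ω}`, which is unbounded in `T`; hence `x_λ → 0`.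
-/

open MeasureTheory Filter Real Set Asymptotics Topology

lemma isLittleO_id_of_tendsto_div {φ : ℝ → ℝ} {l : Filter ℝ}
    (h : Tendsto (fun t => φ t / t) l (𝓝 0)) (hl : ∀ᶠ t in l, t ≠ 0) : φ =o[l] id :=
  (isLittleO_iff_tendsto' (hl.mono fun _ ht h0 => absurd h0 ht)).2 h

section SublinearExponent

variable {φ : ℝ → ℝ} {l : ℝ}

lemma Asymptotics.IsLittleO.eventually_mul_add_le_half_mul_atTop (hφ : φ =o[atTop] id)
    (hl : l < 0) :
    ∀ᶠ r in atTop, l * r + φ r ≤ l / 2 * r := by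
  filter_upwards [hφ.bound (c := -l / 2) (by linarith), eventually_ge_atTop 0] with r hr hr0
  rw [Real.norm_eq_abs, Real.norm_eq_abs, id, abs_of_nonneg hr0] at hr
  linarith [le_abs_self (φ r)]

lemma Asymptotics.IsLittleO.eventually_nonneg_mul_add_atBot (hφ : φ =o[atBot] id)
    (hl : l < 0) :
    ∀ᶠ r in atBot, 0 ≤ l * r + φ r := by
  filter_upwards [hφ.bound (c := -l / 2) (by linarith), eventually_le_atBot 0] with r hr hr0
  rw [Real.norm_eq_abs, Real.norm_eq_abs, id, abs_of_nonpos hr0] at hr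
  nlinarith [neg_abs_le (φ r)]

lemma integrableOn_Ici_exp_mul_add_mul (hφc : Continuous φ) (hφ : φ =o[atTop] id) (hl : l < 0)
    {g : ℝ → ℝ} (hgc : Continuous g) (hg : g =O[atTop] fun _ => (1 : ℝ)) (a : ℝ) :
    IntegrableOn (fun r => exp (l * r + φ r) * g r) (Ici a) := by
  have hexp : (fun r => exp (l * r + φ r)) =O[atTop] fun r => exp (-(-l / 2) * r) :=
    IsBigO.of_bound' <| (hφ.eventually_mul_add_le_half_mul_atTop hl).mono fun r hr => by
      simp only [Real.norm_eq_abs, abs_exp, exp_le_exp]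
      linarith
  rw [integrableOn_Ici_iff_integrableOn_Ioi]
  refine integrable_of_isBigO_exp_neg (b := -l / 2) (by linarith) (by fun_prop) ?_
  simpa using hexp.mul hg

end SublinearExponent

lemma tendsto_setIntegral_Icc_atTop_of_lintegral_eq_top {f : ℝ → ℝ} {a : ℝ}
    (hf : ∀ t, IntegrableOn f (Icc a t)) (hf0 : ∀ r, 0 ≤ f r)
    (htop : ∫⁻ r in Ici a, ENNReal.ofReal (f r) = ⊤) :
    Tendsto (fun t => ∫ r in Icc a t, f r) atTop atTop := by
  have hlintegral : Tendsto (fun t => ∫⁻ r in Icc a t, ENNReal.ofReal (f r)) atTop (𝓝 ⊤) := by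
    have := tendsto_measure_iUnion_atTop (μ := volume.withDensity fun r => ENNReal.ofReal (f r))
      (s := fun t => Icc a t) fun _ _ hst => Icc_subset_Icc_right hst
    simpa only [Function.comp_def, withDensity_apply', iUnion_Icc_right, htop] using this
  refine tendsto_atTop_atTop_of_monotone
    (fun s t hst => setIntegral_mono_set (hf t) (ae_of_all _ hf0)
      (Icc_subset_Icc_right hst).eventuallyLE) fun C => ?_
  obtain ⟨t, ht⟩ := (hlintegral.eventually (lt_mem_nhds (ENNReal.ofReal_lt_top (r := C)))).exists
  rw [← ofReal_integral_eq_lintegral_ofReal (hf t) (ae_of_all _ hf0)] at ht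
  exact ⟨t, (ENNReal.ofReal_lt_ofReal_iff'.1 ht).1.le⟩

lemma tendsto_setIntegral_Ioc_neg_atTop_s19 {f : ℝ → ℝ} (hf : Continuous f) (hf0 : ∀ r, 0 ≤ f r)
    {b : ℝ} (hb : 0 < b) (hfb : ∀ᶠ r in atBot, b ≤ f r) (a : ℝ) :
    Tendsto (fun t => ∫ r in Ioc (-t) a, f r) atTop atTop := by
  obtain ⟨T, hT⟩ := (hfb.and (eventually_le_atBot a)).exists_forall_of_atBot
  have hTa : T ≤ a := (hT T le_rfl).2
  refine tendsto_atTop_mono (fun t => ?_)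
    ((tendsto_atTop_add_const_left _ T tendsto_id).const_mul_atTop hb)
  calc b * (T + id t) ≤ b * volume.real (Ioc (-t) T) := by
        rw [volume_real_Ioc]; gcongr; simp
    _ ≤ ∫ r in Ioc (-t) T, f r :=
        setIntegral_ge_of_const_le_real measurableSet_Ioc (by simp)
          (fun r hr => (hT r hr.2).1) hf.integrableOn_Ioc
    _ ≤ ∫ r in Ioc (-t) a, f r :=
        setIntegral_mono_set hf.integrableOn_Ioc (ae_of_all _ hf0)
          (Ioc_subset_Ioc_right hTa).eventuallyLE

lemma tendstoUniformlyOn_div_add_mul {ι : Type*} {l : Filter ι} {A B : ι → ℝ}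
    (hA : ∀ i, 0 ≤ A i) (hB : Tendsto B l atTop) :
    TendstoUniformlyOn (fun i x => x / (A i + x * B i)) (fun _ => 0) l (Ioi 0) := by
  rw [Metric.tendstoUniformlyOn_iff]
  intro ε hε
  filter_upwards [hB.eventually_gt_atTop ε⁻¹] with i hi x (hx : 0 < x)
  have hBi : 0 < B i := (inv_pos.2 hε).trans hi
  have hden : x * B i ≤ A i + x * B i := le_add_of_nonneg_left (hA i)
  rw [dist_zero_left, Real.norm_of_nonneg (div_nonneg hx.le ((mul_pos hx hBi).le.trans hden))]
  calc x / (A i + x * B i) ≤ x / (x * B i) := div_le_div_of_nonneg_left hx.le (by positivity) hden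
    _ = (B i)⁻¹ := by field_simp
    _ < ε := inv_lt_of_inv_lt₀ hε hi

lemma tendsto_setIntegral_Ici_exp_mul_add_mul_nhdsLT_zero {φ : ℝ → ℝ} (hφc : Continuous φ)
    (hφ : φ =o[atTop] id) {g : ℝ → ℝ} (hgc : Continuous g) (hg : g =O[atTop] fun _ => (1 : ℝ))
    {b : ℝ} (hb : 0 < b) (hgb : ∀ r, b ≤ g r)
    (hdiv : ∫⁻ r in Ici 0, ENNReal.ofReal (exp (φ r)) = ⊤) :
    Tendsto (fun l => ∫ r in Ici 0, exp (l * r + φ r) * g r) (𝓝[<] 0) atTop := by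
  rw [tendsto_atTop]
  intro C
  obtain ⟨T, hT⟩ := ((tendsto_setIntegral_Icc_atTop_of_lintegral_eq_top
    (fun t => (by fun_prop : Continuous fun r => exp (φ r)).integrableOn_Icc)
    (fun r => (exp_pos _).le) hdiv).eventually_ge_atTop (2 * C / b)).exists
  have hnear : ∀ᶠ l in 𝓝[<] (0 : ℝ), 1 / 2 ≤ exp (l * T) := by
    have : Tendsto (fun l => exp (l * T)) (𝓝 0) (𝓝 1) :=
      (by fun_prop : Continuous fun l => exp (l * T)).tendsto' 0 1 (by simp)
    exact nhdsWithin_le_nhds (this.eventually (le_mem_nhds (by norm_num)))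
  filter_upwards [hnear, self_mem_nhdsWithin] with l hlT (hl : l < 0)
  calc C = b / 2 * (2 * C / b) := by field_simp
    _ ≤ b / 2 * ∫ r in Icc 0 T, exp (φ r) := by gcongr
    _ = ∫ r in Icc 0 T, b / 2 * exp (φ r) := (integral_const_mul _ _).symm
    _ ≤ ∫ r in Icc 0 T, exp (l * r + φ r) * g r := by
        refine setIntegral_mono_on (Continuous.integrableOn_Icc (by fun_prop))
          (Continuous.integrableOn_Icc (by fun_prop)) measurableSet_Icc fun r hr => ?_
        have : 1 / 2 ≤ exp (l * r) := hlT.trans (exp_le_exp.2 (by nlinarith [hr.2]))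
        rw [exp_add]
        calc b / 2 * exp (φ r) = 1 / 2 * exp (φ r) * b := by ring
          _ ≤ exp (l * r) * exp (φ r) * g r := by gcongr; exact hgb r
    _ ≤ ∫ r in Ici 0, exp (l * r + φ r) * g r :=
        setIntegral_mono_set (integrableOn_Ici_exp_mul_add_mul hφc hφ hl hgc hg 0)
          (ae_of_all _ fun r => mul_nonneg (exp_pos _).le (hb.le.trans (hgb r)))
          Icc_subset_Ici_self.eventuallyLE

theorem stmt19_general
    (ω : ℝ → ℝ) (hωc : Continuous ω)
    (hωtop : Tendsto (fun t => ω t / t) atTop (nhds 0))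
    (hωbot : Tendsto (fun t => ω t / t) atBot (nhds 0))
    (lam δ β₀ β₁ : ℝ) (hlam : lam < 0)
    (β : ℝ → ℝ) (hβc : Continuous β)
    (hβ₀ : 0 < β₀) (hβl : ∀ t, β₀ ≤ β t) (hβu : ∀ t, β t ≤ β₁)
    (hdiv : ∫⁻ r in Ici (0 : ℝ), ENNReal.ofReal (Real.exp (δ * ω r)) = ⊤)
    (τ : ℝ) :
    (∀ K : Set ℝ, IsCompact K → K ⊆ Ioi 0 →
      TendstoUniformlyOn
        (fun (t : ℝ) (x₀ : ℝ) =>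
          x₀ / (Real.exp (-lam * t + δ * ω (-t)) +
            x₀ * ∫ r in Ioc (-t) (0 : ℝ), Real.exp (lam * r + δ * ω r) * β (r + τ)))
        (fun _ => 0) atTop K) ∧
    (-(∫ r in Ici (0 : ℝ), Real.exp (lam * r + δ * ω r) * β (r + τ))⁻¹ < 0) ∧
    Tendsto
      (fun l : ℝ =>
        -(∫ r in Ici (0 : ℝ), Real.exp (l * r + δ * ω r) * β (r + τ))⁻¹)
      (nhdsWithin 0 (Iio 0)) (nhds 0) := by
  have hφtop : (fun r => δ * ω r) =o[atTop] id :=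
    (isLittleO_id_of_tendsto_div hωtop (eventually_ne_atTop 0)).const_mul_left δ
  have hφbot : (fun r => δ * ω r) =o[atBot] id :=
    (isLittleO_id_of_tendsto_div hωbot (eventually_ne_atBot 0)).const_mul_left δ
  have hβpos : ∀ r, 0 < β r := fun r => hβ₀.trans_le (hβl r)
  have hβbdd : (fun r => β (r + τ)) =O[atTop] fun _ => (1 : ℝ) :=
    IsBigO.of_bound β₁ (Eventually.of_forall fun r => by
      simpa [abs_of_pos (hβpos _)] using hβu (r + τ))
  have hpos : ∀ l r, 0 < exp (l * r + δ * ω r) * β (r + τ) :=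
    fun l r => mul_pos (exp_pos _) (hβpos _)
  refine ⟨fun K _ hK => ?_, ?_, ?_⟩
  · refine (tendstoUniformlyOn_div_add_mul (fun t => (exp_pos _).le) ?_).mono hK
    refine tendsto_setIntegral_Ioc_neg_atTop_s19 (by fun_prop) (fun r => (hpos lam r).le) hβ₀ ?_ 0
    filter_upwards [hφbot.eventually_nonneg_mul_add_atBot hlam] with r hr
    exact (hβl _).trans (le_mul_of_one_le_left (hβpos _).le (one_le_exp hr))
  · rw [neg_lt_zero, inv_pos, setIntegral_pos_iff_support_of_nonneg_ae
      (ae_of_all _ fun r => (hpos lam r).le)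
      (integrableOn_Ici_exp_mul_add_mul (by fun_prop) hφtop hlam (by fun_prop) hβbdd 0)]
    simp [Function.support, (hpos lam _).ne']
  · simpa using (tendsto_inv_atTop_zero.comp (tendsto_setIntegral_Ici_exp_mul_add_mul_nhdsLT_zero
      (by fun_prop) hφtop (by fun_prop) hβbdd hβ₀ (fun r => hβl (r + τ)) hdiv)).neg

/-- Transcritical equation, stable side λ < 0: pullback solutions with
positive initial data in a compact set converge uniformly to 0; the negative
branch x_λ(τ,ω) = -(∫_0^∞ e^{λr+δω(r)} β(r+τ) dr)⁻¹ is negative and tends to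
0 as λ → 0⁻ (given ∫_0^∞ e^{δω(r)} dr = ∞). -/
theorem stmt19
    (ω : ℝ → ℝ) (hωc : Continuous ω)
    (hωtop : Tendsto (fun t => ω t / t) atTop (nhds 0))
    (hωbot : Tendsto (fun t => ω t / t) atBot (nhds 0))
    (lam δ β₀ β₁ : ℝ) (hlam : lam < 0) (hδ : 0 < δ)
    (β : ℝ → ℝ) (hβc : Continuous β)
    (hβ₀ : 0 < β₀) (hβl : ∀ t, β₀ ≤ β t) (hβu : ∀ t, β t ≤ β₁)
    (hdiv : ∫⁻ r in Ici (0 : ℝ), ENNReal.ofReal (Real.exp (δ * ω r)) = ⊤)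
    (τ : ℝ) :
    (∀ K : Set ℝ, IsCompact K → K ⊆ Ioi 0 →
      TendstoUniformlyOn
        (fun (t : ℝ) (x₀ : ℝ) =>
          x₀ / (Real.exp (-lam * t + δ * ω (-t)) +
            x₀ * ∫ r in Ioc (-t) (0 : ℝ), Real.exp (lam * r + δ * ω r) * β (r + τ)))
        (fun _ => 0) atTop K) ∧
    (-(∫ r in Ici (0 : ℝ), Real.exp (lam * r + δ * ω r) * β (r + τ))⁻¹ < 0) ∧
    Tendsto
      (fun l : ℝ =>
        -(∫ r in Ici (0 : ℝ), Real.exp (l * r + δ * ω r) * β (r + τ))⁻¹)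
      (nhdsWithin 0 (Iio 0)) (nhds 0) :=
  stmt19_general ω hωc hωtop hωbot lam δ β₀ β₁ hlam β hβc hβ₀ hβl hβu hdiv τ
end
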